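/- arXiv:1210.7641 — 4 statements merged into one kernel-verified Lean document; each statement's English description precedes it below -/
import Mathlib

section
/- Let f be a multivariate polynomial over ℚ in variables indexed by a type σ, with total degree at most d, and let k ≤ d. Then there exist rational numbers c_0, ..., c_d such that for every point x : σ → ℚ, the evaluation at x of the homogeneous component of degree k of f equals ∑_{i=0}^{d} c_i * f(2^i · x), where f(2^i · x) denotes the evaluation of f at the point (fun s => 2^i * x s). -/
/-!
Writing `f = ∑_{j ≤ d} f_j` with `f_j` homogeneous of degree `j`, one has
`f (t • x) = ∑_j t ^ j * f_j x`: the vector of values `f (t_i • x)` is the Vandermonde matrix of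
the nodes `t_i` applied to the vector `(f_j x)_j`. For distinct nodes this matrix is invertible,
so `f_k x` is row `k` of its inverse applied to the values `f (t_i • x)`, with coefficients
independent of `x`.
-/

namespace MvPolynomial

open Matrix

variable {σ R : Type*} [CommSemiring R]

theorem IsHomogeneous.eval_const_mul {φ : MvPolynomial σ R} {n : ℕ} (hφ : φ.IsHomogeneous n)
    (t : R) (x : σ → R) :
    eval (fun s => t * x s) φ = t ^ n * eval x φ := by
  rw [eval_eq, eval_eq, Finset.mul_sum]
  refine Finset.sum_congr rfl fun m hm => ?_
  have hdeg : ∑ i ∈ m.support, m i = n := by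
    rw [← hφ (mem_support_iff.mp hm), Finsupp.weight_apply, Finsupp.sum]
    simp only [smul_eq_mul, Pi.one_apply, mul_one]
  simp_rw [mul_pow]
  rw [Finset.prod_mul_distrib, Finset.prod_pow_eq_pow_sum, hdeg, mul_left_comm]

theorem sum_homogeneousComponent_of_totalDegree_le {φ : MvPolynomial σ R} {d : ℕ}
    (hφ : φ.totalDegree ≤ d) :
    ∑ j ∈ Finset.range (d + 1), homogeneousComponent j φ = φ := by
  conv_rhs => rw [← sum_homogeneousComponent φ]
  refine (Finset.sum_subset (Finset.range_subset_range.mpr (by omega)) fun j _ hj => ?_).symm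
  exact homogeneousComponent_eq_zero j φ (by simp only [Finset.mem_range, not_lt] at hj; omega)

theorem eval_const_mul_eq_sum_homogeneousComponent {φ : MvPolynomial σ R} {d : ℕ}
    (hφ : φ.totalDegree ≤ d) (t : R) (x : σ → R) :
    eval (fun s => t * x s) φ
      = ∑ j ∈ Finset.range (d + 1), t ^ j * eval x (homogeneousComponent j φ) := by
  conv_lhs => rw [← sum_homogeneousComponent_of_totalDegree_le hφ]
  rw [map_sum]
  exact Finset.sum_congr rfl fun j _ => (homogeneousComponent_isHomogeneous j φ).eval_const_mul t x

theorem exists_eval_homogeneousComponent_eq_sum_eval_const_mul {K : Type*} [Field K] {d : ℕ}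
    {t : Fin (d + 1) → K} (ht : Function.Injective t) {φ : MvPolynomial σ K}
    (hφ : φ.totalDegree ≤ d) (k : Fin (d + 1)) :
    ∃ c : Fin (d + 1) → K, ∀ x : σ → K,
      eval x (homogeneousComponent k φ) = ∑ i, c i * eval (fun s => t i * x s) φ := by
  set V := vandermonde t
  have hV : IsUnit V.det := (det_vandermonde_ne_zero_iff.mpr ht).isUnit
  refine ⟨V⁻¹ k, fun x => ?_⟩
  set h : Fin (d + 1) → K := fun j => eval x (homogeneousComponent j φ)
  have hVh : ∀ i, eval (fun s => t i * x s) φ = (V *ᵥ h) i := fun i => by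
    rw [eval_const_mul_eq_sum_homogeneousComponent hφ, mulVec, dotProduct,
      ← Fin.sum_univ_eq_sum_range]
    rfl
  calc eval x (homogeneousComponent k φ) = (V⁻¹ *ᵥ V *ᵥ h) k := by
        rw [mulVec_mulVec, nonsing_inv_mul V hV, one_mulVec]
    _ = _ := by simp only [mulVec, dotProduct, hVh]

end MvPolynomial

/-- Lemma compo-homo: the degree-`k` homogeneous component of `f` is a fixed rational
linear combination of evaluations of `f` at points scaled by powers of `2`. -/
theorem stmt_5 {σ : Type*} (f : MvPolynomial σ ℚ) (d k : ℕ) (hf : f.totalDegree ≤ d)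
    (hk : k ≤ d) :
    ∃ c : ℕ → ℚ, ∀ x : σ → ℚ,
      MvPolynomial.eval x (MvPolynomial.homogeneousComponent k f)
        = ∑ i ∈ Finset.range (d + 1),
            c i * MvPolynomial.eval (fun s => (2 : ℚ) ^ i * x s) f := by
  have hinj : Function.Injective fun i : Fin (d + 1) => (2 : ℚ) ^ (i : ℕ) :=
    (pow_right_injective₀ two_pos (by norm_num)).comp Fin.val_injective
  obtain ⟨c, hc⟩ :=
    MvPolynomial.exists_eval_homogeneousComponent_eq_sum_eval_const_mul hinj hf ⟨k, by omega⟩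
  refine ⟨fun i => if h : i < d + 1 then c ⟨i, h⟩ else 0, fun x => ?_⟩
  rw [hc x, ← Fin.sum_univ_eq_sum_range]
  simp only [Fin.is_lt, Fin.eta, dite_true]
end

section
/- Let f be a multivariate polynomial over ℚ in variables indexed by σ ⊕ τ, and let w : σ ⊕ τ → ℕ be the weight function that is 0 on σ-variables and 1 on τ-variables. If the w-weighted total degree of f is at most d, then for every k ≤ d there exist rational numbers c_0, ..., c_d such that for every point x : σ ⊕ τ → ℚ, the evaluation at x of the weighted homogeneous component of weighted degree k of f (with respect to w) equals ∑_{i=0}^{d} c_i * (the evaluation of f at the point which agrees with x on σ-variables and equals 2^i * x(t) on each τ-variable t). -/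
open MvPolynomial Finsupp Matrix

private lemma scale_eval {σ τ : Type*} {p : MvPolynomial (σ ⊕ τ) ℚ} {j : ℕ}
    (hp : p.IsWeightedHomogeneous (Sum.elim (fun _ : σ => (0 : ℕ)) fun _ : τ => 1) j)
    (a : ℚ) (x : σ ⊕ τ → ℚ) :
    MvPolynomial.eval (Sum.elim (fun s => x (Sum.inl s)) fun t => a * x (Sum.inr t)) p
      = a ^ j * MvPolynomial.eval x p := by
  classical
  rw [eval_eq, eval_eq, Finset.mul_sum]
  refine Finset.sum_congr rfl fun m hm => ?_
  have hw := hp (MvPolynomial.mem_support_iff.mp hm)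
  rw [weight_apply] at hw
  have key : (∏ v ∈ m.support,
        (Sum.elim (fun s => x (Sum.inl s)) fun t => a * x (Sum.inr t)) v ^ m v)
      = a ^ j * ∏ v ∈ m.support, x v ^ m v := by
    rw [← hw, Finsupp.sum]
    rw [show (∑ v ∈ m.support, m v • Sum.elim (fun _ : σ => (0 : ℕ)) (fun _ : τ => 1) v)
        = ∑ v ∈ m.support, m v * Sum.elim (fun _ : σ => (0 : ℕ)) (fun _ : τ => 1) v from rfl]
    rw [← Finset.prod_pow_eq_pow_sum, ← Finset.prod_mul_distrib]
    refine Finset.prod_congr rfl fun v _ => ?_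
    cases v with
    | inl s => simp
    | inr t => simp [mul_pow]
  rw [key]; ring

/-- Weighted version of Lemma compo-homo: with weight `0` on `σ`-variables and `1` on
`τ`-variables, the weighted homogeneous component of weighted degree `k` of `f` is a fixed
rational linear combination of evaluations of `f` with only the `τ`-variables scaled by
powers of `2`. -/
theorem stmt_6 {σ τ : Type*} (f : MvPolynomial (σ ⊕ τ) ℚ) (d : ℕ)
    (hf : f.weightedTotalDegree (Sum.elim (fun _ : σ => (0 : ℕ)) fun _ : τ => 1) ≤ d)
    (k : ℕ) (hk : k ≤ d) :
    ∃ c : ℕ → ℚ, ∀ x : σ ⊕ τ → ℚ,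
      MvPolynomial.eval x
          (MvPolynomial.weightedHomogeneousComponent
            (Sum.elim (fun _ : σ => (0 : ℕ)) fun _ : τ => 1) k f)
        = ∑ i ∈ Finset.range (d + 1),
            c i * MvPolynomial.eval
              (Sum.elim (fun s => x (Sum.inl s)) fun t => (2 : ℚ) ^ i * x (Sum.inr t)) f := by
  classical
  set w : σ ⊕ τ → ℕ := Sum.elim (fun _ : σ => (0 : ℕ)) fun _ : τ => 1 with hwdef
  -- decomposition of f into weighted homogeneous components
  have hdecomp : f = ∑ j ∈ Finset.range (d + 1), weightedHomogeneousComponent w j f := by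
    ext m
    rw [coeff_sum]
    simp only [coeff_weightedHomogeneousComponent]
    rw [Finset.sum_ite_eq (Finset.range (d + 1)) (weight w m) (fun _ => coeff m f)]
    by_cases hm : m ∈ f.support
    · rw [if_pos]
      rw [Finset.mem_range, Nat.lt_succ_iff]
      exact le_trans (le_weightedTotalDegree w hm) hf
    · rw [MvPolynomial.notMem_support_iff] at hm
      simp [hm]
  -- Vandermonde inversion
  set v : Fin (d + 1) → ℚ := fun i => (2 : ℚ) ^ (i : ℕ) with hv
  have hvinj : Function.Injective v := by
    intro i j h
    rw [hv] at h
    simp only at h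
    have h2 : (2 : ℚ) ^ (i : ℕ) = 2 ^ (j : ℕ) := h
    have h3 : ((2 ^ (i : ℕ) : ℕ) : ℚ) = ((2 ^ (j : ℕ) : ℕ) : ℚ) := by push_cast; exact h2
    exact Fin.ext (Nat.pow_right_injective le_rfl (Nat.cast_injective h3))
  have hdet : (Matrix.vandermonde v).det ≠ 0 := Matrix.det_vandermonde_ne_zero_iff.mpr hvinj
  have hunit : IsUnit (Matrix.vandermonde v).det := isUnit_iff_ne_zero.mpr hdet
  set kk : Fin (d + 1) := ⟨k, Nat.lt_succ_of_le hk⟩ with hkk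
  set cf : Fin (d + 1) → ℚ :=
    ((Matrix.vandermonde v)ᵀ)⁻¹ *ᵥ (Pi.single kk 1) with hcf
  have hVc : ∀ j : Fin (d + 1), (∑ i, cf i * v i ^ (j : ℕ)) = if j = kk then 1 else 0 := by
    have h1 : (Matrix.vandermonde v)ᵀ *ᵥ cf = Pi.single kk 1 := by
      rw [hcf, Matrix.mulVec_mulVec, Matrix.mul_nonsing_inv _ (by rwa [Matrix.det_transpose]),
        Matrix.one_mulVec]
    intro j
    have := congrFun h1 j
    rw [Matrix.mulVec, dotProduct] at this
    simp only [Matrix.transpose_apply, Matrix.vandermonde_apply] at this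
    rw [show (∑ i, cf i * v i ^ (j : ℕ)) = ∑ i, v i ^ (j : ℕ) * cf i from by
      exact Finset.sum_congr rfl fun i _ => mul_comm _ _]
    rw [this]
    by_cases hjk : j = kk <;> simp [hjk, Pi.single_apply]
  set c : ℕ → ℚ := fun i => if h : i < d + 1 then cf ⟨i, h⟩ else 0 with hc
  have hVc' : ∀ j ∈ Finset.range (d + 1),
      (∑ i ∈ Finset.range (d + 1), c i * ((2 : ℚ) ^ i) ^ j) = if j = k then 1 else 0 := by
    intro j hj
    rw [Finset.mem_range] at hj
    have := hVc ⟨j, hj⟩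
    rw [Finset.sum_range fun i => c i * ((2 : ℚ) ^ i) ^ j]
    have hsum : (∑ i : Fin (d + 1), c (i : ℕ) * ((2 : ℚ) ^ (i : ℕ)) ^ j)
        = ∑ i : Fin (d + 1), cf i * v i ^ j := by
      refine Finset.sum_congr rfl fun i _ => ?_
      rw [hc]
      simp [i.isLt, hv]
    rw [hsum, this]
    by_cases hjk : j = k
    · rw [if_pos hjk, if_pos (by rw [hkk]; exact Fin.ext hjk)]
    · rw [if_neg hjk, if_neg (by rw [hkk]; exact fun h => hjk (congrArg Fin.val h))]
  refine ⟨c, fun x => ?_⟩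
  have heval : ∀ i : ℕ,
      MvPolynomial.eval (Sum.elim (fun s => x (Sum.inl s)) fun t => (2 : ℚ) ^ i * x (Sum.inr t)) f
        = ∑ j ∈ Finset.range (d + 1),
            ((2 : ℚ) ^ i) ^ j * MvPolynomial.eval x (weightedHomogeneousComponent w j f) := by
    intro i
    conv_lhs => rw [hdecomp]
    rw [map_sum]
    exact Finset.sum_congr rfl fun j _ =>
      scale_eval (weightedHomogeneousComponent_isWeightedHomogeneous j f) _ x
  calc MvPolynomial.eval x (weightedHomogeneousComponent w k f)
      = ∑ j ∈ Finset.range (d + 1), (if j = k then 1 else 0)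
          * MvPolynomial.eval x (weightedHomogeneousComponent w j f) := by
        simp [Finset.sum_ite_eq' (Finset.range (d + 1)) k, Nat.lt_succ_of_le hk]
    _ = ∑ j ∈ Finset.range (d + 1), (∑ i ∈ Finset.range (d + 1), c i * ((2 : ℚ) ^ i) ^ j)
          * MvPolynomial.eval x (weightedHomogeneousComponent w j f) := by
        refine Finset.sum_congr rfl fun j hj => ?_
        rw [hVc' j hj]
    _ = ∑ i ∈ Finset.range (d + 1), c i * ∑ j ∈ Finset.range (d + 1),
          ((2 : ℚ) ^ i) ^ j * MvPolynomial.eval x (weightedHomogeneousComponent w j f) := by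
        simp only [Finset.sum_mul, Finset.mul_sum]
        rw [Finset.sum_comm]
        exact Finset.sum_congr rfl fun i _ => Finset.sum_congr rfl fun j _ => by ring
    _ = _ := by
        refine Finset.sum_congr rfl fun i _ => ?_
        rw [heval i]
end

section
/- Let G be a simple graph on a vertex type V, and let cone(G) be the simple graph on Option V in which the extra vertex (none) is adjacent to every vertex (some a), and (some a) is adjacent to (some b) if and only if a and b are adjacent in G. Let H be a simple graph. Then cone(G) admits a graph homomorphism to H if and only if there exists a vertex w of H such that G admits a graph homomorphism to the subgraph of H induced on the neighborhood of w. -/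
/-- The cone over a simple graph `G`: one new vertex (`none`) adjacent to every vertex of
`G`, with the adjacency of `G` preserved on the old vertices. -/
def SimpleGraph.cone {V : Type*} (G : SimpleGraph V) : SimpleGraph (Option V) where
  Adj u v :=
    match u, v with
    | none, none => False
    | none, some _ => True
    | some _, none => True
    | some a, some b => G.Adj a b
  symm := by
    constructor
    intro u v h
    cases u <;> cases v <;> simp_all <;> exact h.symm
  loopless := by
    constructor
    intro u
    cases u <;> simp

/-! A homomorphism out of the cone amounts to the image `w` of the apex together with a
homomorphism of `G` landing in the neighbourhood of `w`: every vertex of `G` is adjacent to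
the apex, so its image is adjacent to `w`. -/

namespace SimpleGraph

variable {V W : Type*} {G : SimpleGraph V} {H : SimpleGraph W}

theorem cone_adj_none_some (a : V) : G.cone.Adj none (some a) := trivial

theorem cone_adj_some_some {a b : V} : G.cone.Adj (some a) (some b) ↔ G.Adj a b := Iff.rfl

namespace Hom

def restrictCone (f : G.cone →g H) : G →g H.induce (H.neighborSet (f none)) where
  toFun a := ⟨f (some a), f.map_adj (cone_adj_none_some a)⟩
  map_rel' h := f.map_adj (cone_adj_some_some.mpr h)

def extendCone (w : W) (f : G →g H.induce (H.neighborSet w)) : G.cone →g H where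
  toFun v := v.elim w fun a => f a
  map_rel' := by
    rintro (_ | a) (_ | b) h
    · exact h.elim
    · exact (f b).2
    · exact (f a).2.symm
    · exact f.map_adj h

end Hom

end SimpleGraph

/-- `cone G` is homomorphic to `H` iff `G` is homomorphic to the subgraph of `H` induced
on the neighborhood of some vertex `w` of `H`. -/
theorem stmt_7 {V W : Type*} (G : SimpleGraph V) (H : SimpleGraph W) :
    Nonempty (G.cone →g H) ↔
      ∃ w : W, Nonempty (G →g H.induce (H.neighborSet w)) :=
  ⟨fun ⟨f⟩ => ⟨f none, ⟨f.restrictCone⟩⟩, fun ⟨w, ⟨f⟩⟩ => ⟨.extendCone w f⟩⟩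
end

section
/- Fix n ≥ 1 and let y : Fin n → Fin n → ℚ. Define a : (Fin n ⊕ Fin n) → (Fin n ⊕ Fin n) → ℚ by: a (inl i) (inr j) = 0 if i = j and y i j otherwise; and a u v = 1 in all other cases (i.e., when u is of the form inr, or both u and v are of the form inl). Then ∑_{S ⊆ Fin n ⊕ Fin n} ∏_{u ∈ S} ∏_{v ∉ S} a u v = ∑_{(A,B)} ∏_{i ∈ A} ∏_{j ∈ B} y i j, where the right-hand sum ranges over all ordered pairs (A, B) of disjoint subsets of Fin n. -/
open Finset

private lemma sum_decomp' {α β : Type*} [Fintype α] [Fintype β] [DecidableEq α] [DecidableEq β]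
    (S : Finset (α ⊕ β)) :
    S = (univ.filter fun i => Sum.inl i ∈ S).image Sum.inl
        ∪ (univ.filter fun j => Sum.inr j ∈ S).image Sum.inr := by
  ext x
  cases x <;> simp

private lemma prod_sum_split' {α β M : Type*} [Fintype α] [Fintype β] [DecidableEq α]
    [DecidableEq β] [CommMonoid M] (S : Finset (α ⊕ β)) (f : α ⊕ β → M) :
    ∏ x ∈ S, f x = (∏ i ∈ univ.filter fun i => Sum.inl i ∈ S, f (Sum.inl i))
      * ∏ j ∈ univ.filter fun j => Sum.inr j ∈ S, f (Sum.inr j) := by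
  conv_lhs => rw [sum_decomp' S]
  rw [Finset.prod_union (by simp [Finset.disjoint_left]),
    Finset.prod_image (fun _ _ _ _ h => Sum.inl.inj h),
    Finset.prod_image (fun _ _ _ _ h => Sum.inr.inj h)]

open scoped Classical in
/-- Substituting the indicated `0`/`1`/`y` values into the cut enumerator `Cut²_{2n}`
(on `n` left vertices `inl i` and `n` right vertices `inr j`) yields the generating
function of pairs of disjoint subsets of `[n]`, i.e. of complete bipartite subgraphs. -/
theorem stmt_11 (n : ℕ) (hn : 1 ≤ n) (y : Fin n → Fin n → ℚ)
    (a : (Fin n ⊕ Fin n) → (Fin n ⊕ Fin n) → ℚ)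
    (ha₁ : ∀ i j : Fin n, a (Sum.inl i) (Sum.inr j) = if i = j then 0 else y i j)
    (ha₂ : ∀ (u : Fin n ⊕ Fin n) (j : Fin n), a u (Sum.inl j) = 1)
    (ha₃ : ∀ (i : Fin n) (v : Fin n ⊕ Fin n), a (Sum.inr i) v = 1) :
    ∑ S : Finset (Fin n ⊕ Fin n), ∏ u ∈ S, ∏ v ∈ Sᶜ, a u v
      = ∑ p ∈ Finset.univ.filter
            (fun p : Finset (Fin n) × Finset (Fin n) => Disjoint p.1 p.2),
          ∏ i ∈ p.1, ∏ j ∈ p.2, y i j := by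
  classical
  have key : ∀ S : Finset (Fin n ⊕ Fin n),
      ∏ u ∈ S, ∏ v ∈ Sᶜ, a u v
        = ∏ i ∈ univ.filter (fun i => Sum.inl i ∈ S),
            ∏ j ∈ univ.filter (fun j => Sum.inr j ∉ S),
              (if i = j then 0 else y i j) := by
    intro S
    rw [prod_sum_split' S (fun u => ∏ v ∈ Sᶜ, a u v)]
    have h2 : ∏ j ∈ univ.filter (fun j => Sum.inr j ∈ S), ∏ v ∈ Sᶜ, a (Sum.inr j) v = 1 :=
      Finset.prod_eq_one fun j _ => Finset.prod_eq_one fun v _ => ha₃ j v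
    rw [h2, mul_one]
    refine Finset.prod_congr rfl fun i _ => ?_
    rw [prod_sum_split' Sᶜ (fun v => a (Sum.inl i) v)]
    have h3 : ∏ j ∈ univ.filter (fun j => Sum.inl j ∈ Sᶜ), a (Sum.inl i) (Sum.inl j) = 1 :=
      Finset.prod_eq_one fun j _ => ha₂ _ j
    rw [h3, one_mul]
    refine Finset.prod_congr ?_ fun j _ => ha₁ i j
    ext j; simp
  calc ∑ S : Finset (Fin n ⊕ Fin n), ∏ u ∈ S, ∏ v ∈ Sᶜ, a u v
      = ∑ S : Finset (Fin n ⊕ Fin n),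
          ∏ i ∈ univ.filter (fun i => Sum.inl i ∈ S),
            ∏ j ∈ univ.filter (fun j => Sum.inr j ∉ S), (if i = j then 0 else y i j) :=
        Finset.sum_congr rfl fun S _ => key S
    _ = ∑ p : Finset (Fin n) × Finset (Fin n),
          ∏ i ∈ p.1, ∏ j ∈ p.2, (if i = j then 0 else y i j) := by
        refine Finset.sum_nbij'
          (i := fun S => (univ.filter fun i => Sum.inl i ∈ S,
            univ.filter fun j => Sum.inr j ∉ S))
          (j := fun p => p.1.image Sum.inl ∪ p.2ᶜ.image Sum.inr)
          (fun _ _ => Finset.mem_univ _) (fun _ _ => Finset.mem_univ _)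
          ?_ ?_ (fun S _ => rfl)
        · intro S _
          ext x
          cases x <;> simp
        · intro p _
          ext x
          · simp
          · simp
    _ = ∑ p ∈ Finset.univ.filter
            (fun p : Finset (Fin n) × Finset (Fin n) => Disjoint p.1 p.2),
          ∏ i ∈ p.1, ∏ j ∈ p.2, y i j := by
        rw [← Finset.sum_filter_add_sum_filter_not univ
          (fun p : Finset (Fin n) × Finset (Fin n) => Disjoint p.1 p.2)]
        have hz : ∑ p ∈ univ.filter
              (fun p : Finset (Fin n) × Finset (Fin n) => ¬ Disjoint p.1 p.2),
            ∏ i ∈ p.1, ∏ j ∈ p.2, (if i = j then 0 else y i j) = 0 := by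
          refine Finset.sum_eq_zero fun p hp => ?_
          simp only [Finset.mem_filter] at hp
          obtain ⟨x, hx1, hx2⟩ := Finset.not_disjoint_iff.mp hp.2
          exact Finset.prod_eq_zero hx1 (Finset.prod_eq_zero hx2 (by simp))
        rw [hz, add_zero]
        refine Finset.sum_congr rfl fun p hp => ?_
        simp only [Finset.mem_filter] at hp
        refine Finset.prod_congr rfl fun i hi => Finset.prod_congr rfl fun j hj => ?_
        rw [if_neg]
        exact fun h => Finset.disjoint_left.mp hp.2 hi (h ▸ hj)
end
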